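/- If x is a binary word such that 01x10 is a factor of the Thue–Morse word t, then the word 110110·θ(x)·100 is cubefree. -/

import Mathlib

/-- The Thue–Morse morphism θ (0 ↦ 01, 1 ↦ 10), with 0 = `false`, 1 = `true`,
applied letterwise to a word. -/
def tmMap (w : List Bool) : List Bool :=
  w.flatMap (fun b => if b then [true, false] else [false, true])

/-- A word is cubefree if it contains no non-empty factor of the form `x ++ x ++ x`. -/
def Cubefree (w : List Bool) : Prop :=
  ∀ x : List Bool, x ≠ [] → ¬ (x ++ x ++ x) <:+: w

/-- `w` is a factor of the Thue–Morse word `t = θ^ω(0)`: since the words `θ^m(0)`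
are prefixes of `t` whose lengths tend to infinity, this holds iff `w` is an
infix of `θ^m(0)` for some `m`. -/
def FactorTM (w : List Bool) : Prop :=
  ∃ m : ℕ, w <:+: tmMap^[m] [false]

/-- The binary morphism determined by `h : Bool → List Bool` is cubefree. -/
def CubefreeMorphism (h : Bool → List Bool) : Prop :=
  ∀ w : List Bool, Cubefree w → Cubefree (w.flatMap h)

/-!
The word `0110 θ(x) 100` is a prefix of `θ(01x10)`, hence a factor of the Thue–Morse word, which
is overlap-free because θ preserves overlap-freeness. A cube `uuu` in `11 · 0110 θ(x) 100` that
reaches into the overlap-free part far enough yields, after rotating `u`, an overlap inside it; the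
remaining cubes lie in the prefix `110110`, which is cubefree.
-/

open List

section Overlap

variable {α : Type*}

def OverlapFree (w : List α) : Prop :=
  ∀ z : List α, z ≠ [] → ¬ z ++ z ++ z.take 1 <:+: w

theorem OverlapFree.of_infix {v w : List α} (hw : OverlapFree w) (h : v <:+: w) :
    OverlapFree v :=
  fun z hz hzv => hw z hz (hzv.trans h)

def OverlapAt (w : List α) (q p : ℕ) : Prop :=
  q + 2 * p < w.length ∧ ∀ j ≤ p, w[q + j]? = w[q + j + p]?

theorem getElem?_overlap_add {z : List α} {j : ℕ} (hj : j ≤ z.length) :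
    (z ++ z ++ z.take 1)[j]? = (z ++ z ++ z.take 1)[j + z.length]? := by
  simp only [getElem?_append, length_append]
  split_ifs <;> first
    | omega
    | (congr 1; omega)
    | simp [show j - z.length = 0 by omega, show j + z.length - (z.length + z.length) = 0 by omega]

theorem exists_overlapAt_iff {w : List α} {p : ℕ} (hp : 0 < p) :
    (∃ z : List α, z.length = p ∧ z ++ z ++ z.take 1 <:+: w) ↔ ∃ q, OverlapAt w q p := by
  constructor
  · rintro ⟨z, rfl, A, B, rfl⟩
    have hy : ∀ i < 2 * z.length + 1, (A ++ (z ++ z ++ z.take 1) ++ B)[A.length + i]? =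
        (z ++ z ++ z.take 1)[i]? := fun i hi => by
      rw [append_assoc, getElem?_append_right (by omega), Nat.add_sub_cancel_left,
        getElem?_append_left (by simp; omega)]
    refine ⟨A.length, by simp; omega, fun j hj => ?_⟩
    rw [hy j (by omega), add_assoc, hy (j + z.length) (by omega), getElem?_overlap_add hj]
  · rintro ⟨q, hlen, hper⟩
    set u := w.drop q
    have hshift : (u.drop p).take (p + 1) = u.take (p + 1) := ext_getElem? fun j => by
      simp only [getElem?_take, getElem?_drop, u]
      split_ifs with hj
      · rw [hper j (by omega), Nat.add_right_comm, Nat.add_assoc]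
      · rfl
    have hu : u.take p ++ u.take p ++ (u.take p).take 1 = u.take (2 * p + 1) := by
      have hhead : (u.take p).take 1 = (u.drop p).take 1 := by
        have h1 := congrArg (take 1) hshift
        simp only [take_take, min_eq_left (Nat.succ_le_of_lt hp), min_eq_left (Nat.le_add_left 1 p)] at h1 ⊢
        exact h1.symm
      rw [hhead, append_assoc, ← take_add, ← hshift, ← take_add, two_mul, add_assoc]
    refine ⟨u.take p, by simp [u]; omega, ?_⟩
    rw [hu]
    exact (take_prefix _ _).isInfix.trans (drop_suffix _ _).isInfix

theorem overlapFree_iff {w : List α} : OverlapFree w ↔ ∀ q p, 0 < p → ¬ OverlapAt w q p := by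
  constructor
  · intro hw q p hp hqp
    obtain ⟨z, hz, hzw⟩ := (exists_overlapAt_iff hp).2 ⟨q, hqp⟩
    exact hw z (ne_nil_of_length_pos (hz ▸ hp)) hzw
  · intro hw z hz hzw
    obtain ⟨q, hqp⟩ := (exists_overlapAt_iff (length_pos_iff.2 hz)).1 ⟨z, rfl, hzw⟩
    exact hw q z.length (length_pos_iff.2 hz) hqp

theorem OverlapFree.not_cube_infix {u v : List α} (hv : OverlapFree v) (hu : u ≠ []) :
    ¬ u ++ u ++ u <:+: v := fun h =>
  hv u hu (((prefix_append_right_inj (u ++ u)).2 (take_prefix 1 u)).isInfix.trans h)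

theorem cube_infix_take_of_overlapFree {a v u : List α} (hv : OverlapFree v) (hu : u ≠ [])
    (h : u ++ u ++ u <:+: a ++ v) : u ++ u ++ u <:+: (a ++ v).take (3 * a.length) := by
  obtain ⟨l, r, hlr⟩ := h
  have hv_eq : v = (l ++ (u ++ u ++ u) ++ r).drop a.length := by rw [hlr, drop_left]
  by_cases hla : a.length ≤ l.length
  · rw [append_assoc, drop_append_of_le_length hla] at hv_eq
    exact absurd ⟨_, r, by rw [hv_eq, append_assoc]⟩ (hv.not_cube_infix hu)
  by_cases hlu : l.length + u.length ≤ a.length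
  · have hpre : l ++ (u ++ u ++ u) <+: (a ++ v).take (3 * a.length) :=
      prefix_take_iff.2 ⟨⟨r, hlr⟩, by simp; omega⟩
    exact (suffix_append l _).isInfix.trans hpre.isInfix
  · -- The cube starts in `a` and `u` reaches past `a`: rotating `u` at the end of `a` gives an
    -- overlap at the start of `v`.
    exfalso
    obtain ⟨j, hj⟩ : ∃ j, a.length = l.length + j := ⟨a.length - l.length, by omega⟩
    have hju : j ≤ u.length := by omega
    rw [hj, append_assoc, ← drop_drop, drop_left, append_assoc, append_assoc,
      drop_append_of_le_length hju] at hv_eq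
    set z := u.drop j ++ u.take j
    have hz : z ++ z ++ z.take 1 <+: v := by
      have hv' : v = z ++ z ++ (u.drop j ++ r) := by
        rw [hv_eq]
        simp only [z, append_assoc, append_cancel_left_eq]
        simp only [← append_assoc, take_append_drop]
      have hz1 : z.take 1 = (u.drop j).take 1 := take_append_of_le_length (by simp; omega)
      rw [hv', hz1]
      exact (prefix_append_right_inj _).2 ((take_prefix 1 _).trans (prefix_append _ _))
    exact hv z (by simp [z]; omega) hz.isInfix

end Overlap

theorem tmMap_cons (a : Bool) (w : List Bool) : tmMap (a :: w) = a :: (!a) :: tmMap w := by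
  cases a <;> rfl

theorem length_tmMap (w : List Bool) : (tmMap w).length = 2 * w.length := by
  induction w with
  | nil => rfl
  | cons a w ih => simp only [tmMap_cons, length_cons, ih]; ring

theorem getElem?_tmMap (w : List Bool) (i : ℕ) :
    (tmMap w)[i]? = w[i / 2]?.map ((i % 2 == 1) ^^ ·) := by
  induction w generalizing i with
  | nil => rfl
  | cons a w ih =>
    match i with
    | 0 => simp [tmMap_cons]
    | 1 => simp [tmMap_cons]
    | i + 2 => simp [tmMap_cons, ih, Nat.add_mod_right]

theorem getElem?_tmMap_two_mul (w : List Bool) (k : ℕ) : (tmMap w)[2 * k]? = w[k]? := by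
  simp [getElem?_tmMap]

theorem getElem?_tmMap_two_mul_add_one (w : List Bool) (k : ℕ) :
    (tmMap w)[2 * k + 1]? = w[k]?.map (!·) := by
  simp [getElem?_tmMap, Nat.add_mod, Nat.add_div]

theorem OverlapAt.of_tmMap_two_mul {w : List Bool} {q P : ℕ}
    (h : OverlapAt (tmMap w) q (2 * P)) : OverlapAt w (q / 2) P := by
  obtain ⟨hlen, hper⟩ := h
  rw [length_tmMap] at hlen
  refine ⟨by omega, fun i hi => ?_⟩
  have hi' := hper (2 * i) (by omega)
  rw [getElem?_tmMap, getElem?_tmMap, show (q + 2 * i) / 2 = q / 2 + i by omega,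
    show (q + 2 * i + 2 * P) / 2 = q / 2 + i + P by omega,
    show (q + 2 * i + 2 * P) % 2 = (q + 2 * i) % 2 by omega] at hi'
  exact Option.map_injective (fun _ _ => Bool.xor_right_inj.1) hi'

theorem getElem?_eq_of_tmMap_odd_shift {w : List Bool} {k c : ℕ}
    (h₀ : (tmMap w)[2 * k]? = (tmMap w)[2 * k + (2 * c + 1)]?)
    (h₁ : (tmMap w)[2 * k + 1]? = (tmMap w)[2 * k + 1 + (2 * c + 1)]?) :
    w[k + c]? = w[k + c + 1]? := by
  rw [show 2 * k + (2 * c + 1) = 2 * (k + c) + 1 by ring, getElem?_tmMap_two_mul,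
    getElem?_tmMap_two_mul_add_one] at h₀
  rw [show 2 * k + 1 + (2 * c + 1) = 2 * (k + c + 1) by ring, getElem?_tmMap_two_mul,
    getElem?_tmMap_two_mul_add_one, h₀] at h₁
  simpa [Option.map_map, Function.comp_def] using h₁

theorem getElem?_tmMap_two_mul_ne {w : List Bool} {k : ℕ} (hk : k < w.length) :
    (tmMap w)[2 * k]? ≠ (tmMap w)[2 * k + 1]? := by
  simp [getElem?_tmMap_two_mul, getElem?_tmMap_two_mul_add_one, getElem?_eq_getElem hk]

theorem OverlapAt.exists_of_tmMap_odd {w : List Bool} {q c : ℕ}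
    (h : OverlapAt (tmMap w) q (2 * c + 1)) : ∃ k, OverlapAt w k 1 := by
  obtain ⟨hlen, hper⟩ := h
  rw [length_tmMap] at hlen
  obtain ⟨k, hk⟩ : ∃ k, 2 * k = q ∨ 2 * k = q + 1 := ⟨(q + 1) / 2, by omega⟩
  -- A block `θ(w[i])` in the first period, shifted by the odd period, straddles two blocks.
  have hblock : ∀ i, q ≤ 2 * i → 2 * i + 1 ≤ q + (2 * c + 1) → w[i + c]? = w[i + c + 1]? :=
    fun i h₁ h₂ => getElem?_eq_of_tmMap_odd_shift
      (by simpa [show q + (2 * i - q) = 2 * i by omega] using hper (2 * i - q) (by omega))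
      (by simpa [show q + (2 * i + 1 - q) = 2 * i + 1 by omega] using hper (2 * i + 1 - q) (by omega))
  rcases Nat.eq_zero_or_pos c with rfl | hc
  · refine absurd ?_ (getElem?_tmMap_two_mul_ne (w := w) (k := k) (by omega))
    rcases hk with rfl | hk
    · exact hper 0 (by omega)
    · simpa [hk] using hper 1 le_rfl
  by_cases hnext : 2 * k + 3 ≤ q + (2 * c + 1)
  · refine ⟨k + c, by omega, fun j hj => ?_⟩
    interval_cases j
    · exact hblock k (by omega) (by omega)
    · simpa [Nat.add_right_comm] using hblock (k + 1) (by omega) (by omega)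
  · -- Only one block fits: `p = 3` and `q` is odd; positions `q + 3` and `q + 6` then disagree.
    obtain ⟨rfl, hq⟩ : c = 1 ∧ q + 1 = 2 * k := by omega
    have h3 := hper 3 le_rfl
    rw [show q + 3 + (2 * 1 + 1) = 2 * (k + 2) + 1 by omega, show q + 3 = 2 * (k + 1) by omega,
      getElem?_tmMap_two_mul, getElem?_tmMap_two_mul_add_one, hblock k (by omega) (by omega),
      getElem?_eq_getElem (show k + 2 < w.length by omega)] at h3
    simp at h3

theorem OverlapFree.tmMap {w : List Bool} (hw : OverlapFree w) : OverlapFree (tmMap w) := by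
  rw [overlapFree_iff] at hw ⊢
  intro q p hp h
  obtain ⟨P, rfl | rfl⟩ := Nat.even_or_odd' p
  · exact hw (q / 2) P (by omega) h.of_tmMap_two_mul
  · obtain ⟨k, hk⟩ := h.exists_of_tmMap_odd
    exact hw k 1 one_pos hk

theorem overlapFree_tmMap_iterate (m : ℕ) : OverlapFree (tmMap^[m] [false]) := by
  induction m with
  | zero =>
    intro z hz h
    have := h.length_le
    simp only [length_append, length_take, Function.iterate_zero_apply, length_singleton] at this
    have := length_pos_iff.2 hz
    omega
  | succ m ih =>
    rw [Function.iterate_succ_apply']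
    exact ih.tmMap

theorem cubefree_110110 : Cubefree [true, true, false, true, true, false] := by
  intro u hu h
  have := h.length_le
  simp only [length_append, length_cons, length_nil] at this
  rcases u with _ | ⟨a, _ | ⟨b, _ | ⟨c, u⟩⟩⟩
  · exact hu rfl
  · exact absurd h (by cases a <;> decide)
  · exact absurd h (by cases a <;> cases b <;> decide)
  · simp only [length_cons] at this
    omega

theorem stmt13 (x : List Bool)
    (hx : FactorTM ([false, true] ++ x ++ [true, false])) :
    Cubefree ([true, true, false, true, true, false] ++ tmMap x ++ [true, false, false]) := by
  obtain ⟨m, hm⟩ := hx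
  have hV : OverlapFree ([false, true, true, false] ++ tmMap x ++ [true, false, false]) := by
    refine (overlapFree_tmMap_iterate (m + 1)).of_infix ?_
    rw [Function.iterate_succ_apply']
    refine IsInfix.trans ⟨[], [true], ?_⟩ (hm.flatMap _)
    simp [tmMap]
  intro u hu hcube
  have h := cube_infix_take_of_overlapFree (a := [true, true]) hV hu (by simpa using hcube)
  exact cubefree_110110 u hu (by simpa using h)
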